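/- If ε ∈ (0,1) and R ∈ ℕ satisfy (4/(3√π))·(e|τ|/(4(R+1)))^{2(R+1)} ≤ ε, then the tail of the Bessel series is bounded: 2 Σ_{l=0}^∞ |J_{2R+2l+2}(τ)| ≤ ε. -/

import Mathlib

/-!
The terms are bounded by `|J_k(τ)| ≤ (|τ|/2)^k / k!`. Writing `J_n(τ) = (τ/2)^n f((τ/2)^2)`, the
entire function `f` solves `y f'' + (n+1) f' + f = 0`, so the energy `f² + y f'²` has derivative
`-(2n+1) f'² ≤ 0` and `f²` stays below `f(0)² = (1/n!)²` on `[0, ∞)`.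

With `n = 2R+2` the tail is then dominated by a geometric series of ratio `(|τ|/(2(n+1)))²`, and
Stirling's bound `n! ≥ √(2πn) (n/e)^n ≥ 2√π (n/e)^n` turns its leading term into `A^n / (2√π)`,
`A = e|τ|/(2n)`. The hypothesis with `ε < 1` forces `A ≤ e/2`, so the ratio is at most `1/4` and
the geometric factor at most `4/3`.
-/

/-- Bessel function of the first kind of (natural) order `n`. -/
noncomputable def besselJ (n : ℕ) (τ : ℝ) : ℝ :=
  ∑' m : ℕ, (-1 : ℝ) ^ m / (Nat.factorial m * Nat.factorial (m + n)) * (τ / 2) ^ (2 * m + n)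

open Real Nat

noncomputable section

section PowerSeries

variable {a : ℕ → ℝ} {C : ℝ}

def powerSeriesSum (a : ℕ → ℝ) (z : ℝ) : ℝ := ∑' m, a m * z ^ m

def derivCoeff (a : ℕ → ℝ) (m : ℕ) : ℝ := (m + 1) * a (m + 1)

theorem abs_derivCoeff_le (ha : ∀ m, |a m| ≤ C / m !) (m : ℕ) : |derivCoeff a m| ≤ C / m ! := by
  have hm : (0 : ℝ) < m + 1 := by positivity
  calc |derivCoeff a m| = (m + 1) * |a (m + 1)| := by
        rw [derivCoeff, abs_mul, abs_of_pos hm]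
    _ ≤ (m + 1) * (C / (m + 1)!) := by gcongr; exact ha _
    _ = C / m ! := by
        rw [factorial_succ, cast_mul, cast_succ]; field_simp

theorem summable_mul_pow_of_abs_le (ha : ∀ m, |a m| ≤ C / m !) (y : ℝ) :
    Summable fun m => a m * y ^ m := by
  refine .of_norm_bounded ((summable_pow_div_factorial |y|).mul_left C) fun m => ?_
  calc ‖a m * y ^ m‖ = |a m| * |y| ^ m := by rw [norm_mul, norm_pow, norm_eq_abs, norm_eq_abs]
    _ ≤ C / m ! * |y| ^ m := by gcongr; exact ha m
    _ = C * (|y| ^ m / m !) := by ring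

theorem hasDerivAt_powerSeriesSum (ha : ∀ m, |a m| ≤ C / m !) (y : ℝ) :
    HasDerivAt (powerSeriesSum a) (powerSeriesSum (derivCoeff a) y) y := by
  have hshift : powerSeriesSum a = fun z => a 0 + ∑' m, a (m + 1) * z ^ (m + 1) := by
    funext z
    simp [powerSeriesSum, (summable_mul_pow_of_abs_le ha z).tsum_eq_zero_add]
  set Y := |y| + 1
  have hy : y ∈ Set.Ioo (-Y) Y := abs_lt.mp (by simp [Y])
  rw [hshift]
  refine .const_add _ (hasDerivAt_tsum_of_isPreconnected (g := fun m z => a (m + 1) * z ^ (m + 1))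
    (g' := fun m z => derivCoeff a m * z ^ m)
    ((summable_pow_div_factorial Y).mul_left C) isOpen_Ioo isPreconnected_Ioo
    (fun m z _ => ?_) (fun m z hz => ?_) hy ?_ hy)
  · refine ((hasDerivAt_pow (m + 1) z).const_mul (a (m + 1))).congr_deriv ?_
    simp only [derivCoeff, add_tsub_cancel_right, cast_add, cast_one]
    ring
  · calc ‖derivCoeff a m * z ^ m‖ = |derivCoeff a m| * |z| ^ m := by
          rw [norm_mul, norm_pow, norm_eq_abs, norm_eq_abs]
      _ ≤ |derivCoeff a m| * Y ^ m := by gcongr; exact (abs_lt.mpr hz).le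
      _ ≤ C / m ! * Y ^ m := by gcongr; exact abs_derivCoeff_le ha m
      _ = C * (Y ^ m / m !) := by ring
  · exact (summable_nat_add_iff 1).mpr (summable_mul_pow_of_abs_le ha y)

theorem hasSum_natCast_mul_mul_pow (ha : ∀ m, |a m| ≤ C / m !) (y : ℝ) :
    HasSum (fun m => m * a m * y ^ m) (y * powerSeriesSum (derivCoeff a) y) := by
  rw [← hasSum_nat_add_iff' 1, Finset.sum_range_one, cast_zero, zero_mul, zero_mul, sub_zero]
  refine ((summable_mul_pow_of_abs_le (abs_derivCoeff_le ha) y).hasSum.mul_left y).congr_fun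
    fun m => ?_
  simp only [derivCoeff, cast_add, cast_one]
  ring

theorem powerSeriesSum_zero (a : ℕ → ℝ) : powerSeriesSum a 0 = a 0 := by
  rw [powerSeriesSum, tsum_eq_single 0 fun m hm => by simp [zero_pow hm]]
  simp

end PowerSeries

theorem abs_le_abs_zero_of_ode {f f' f'' : ℝ → ℝ} {a : ℝ} (ha : 1 / 2 ≤ a)
    (hf : ∀ z, HasDerivAt f (f' z) z) (hf' : ∀ z, HasDerivAt f' (f'' z) z)
    (hode : ∀ z, z * f'' z + a * f' z + f z = 0) {y : ℝ} (hy : 0 ≤ y) : |f y| ≤ |f 0| := by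
  set E : ℝ → ℝ := fun z => f z ^ 2 + z * f' z ^ 2
  have hE : ∀ z, HasDerivAt E ((1 - 2 * a) * f' z ^ 2) z := fun z => by
    refine (((hf z).pow 2).add ((hasDerivAt_id z).mul ((hf' z).pow 2))).congr_deriv ?_
    simp only [id, cast_ofNat, Pi.pow_apply]
    linear_combination (2 * f' z) * hode z
  have hanti : Antitone E := antitone_of_deriv_nonpos (fun z => (hE z).differentiableAt)
    fun z => (hE z).deriv ▸ mul_nonpos_of_nonpos_of_nonneg (by linarith) (sq_nonneg _)
  refine sq_le_sq.mp ?_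
  calc f y ^ 2 ≤ E y := le_add_of_nonneg_right (by positivity)
    _ ≤ E 0 := hanti hy
    _ = f 0 ^ 2 := by simp [E]

def besselCoeff (n m : ℕ) : ℝ := (-1) ^ m / (m ! * (m + n)!)

theorem abs_besselCoeff_le (n m : ℕ) : |besselCoeff n m| ≤ 1 / n ! / m ! := by
  rw [besselCoeff, abs_div, abs_pow, abs_neg, abs_one, one_pow, abs_of_pos (by positivity),
    div_div, mul_comm (n ! : ℝ)]
  gcongr
  exact Nat.le_add_left n m

theorem besselCoeff_add_one_mul_derivCoeff (n m : ℕ) :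
    ((m : ℝ) + n + 1) * derivCoeff (besselCoeff n) m + besselCoeff n m = 0 := by
  have hfac : ((m + 1 + n)! : ℝ) = (m + n + 1) * (m + n)! := by
    rw [show m + 1 + n = m + n + 1 by ring, factorial_succ]; push_cast; ring
  rw [derivCoeff, besselCoeff, besselCoeff, hfac, factorial_succ, pow_succ]
  push_cast
  field_simp
  ring

theorem powerSeriesSum_besselCoeff_ode (n : ℕ) (z : ℝ) :
    z * powerSeriesSum (derivCoeff (derivCoeff (besselCoeff n))) z +
      ((n : ℝ) + 1) * powerSeriesSum (derivCoeff (besselCoeff n)) z +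
      powerSeriesSum (besselCoeff n) z = 0 := by
  have hc := abs_besselCoeff_le n
  have hc' := abs_derivCoeff_le hc
  have hsum := ((hasSum_natCast_mul_mul_pow hc' z).add
    ((summable_mul_pow_of_abs_le hc' z).hasSum.mul_left ((n : ℝ) + 1))).add
    (summable_mul_pow_of_abs_le hc z).hasSum
  have hterm : ∀ m : ℕ, m * derivCoeff (besselCoeff n) m * z ^ m +
      ((n : ℝ) + 1) * (derivCoeff (besselCoeff n) m * z ^ m) + besselCoeff n m * z ^ m = 0 :=
    fun m => by linear_combination z ^ m * besselCoeff_add_one_mul_derivCoeff n m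
  simp only [hterm] at hsum
  exact (hasSum_zero.unique hsum).symm

theorem abs_powerSeriesSum_besselCoeff_le (n : ℕ) {y : ℝ} (hy : 0 ≤ y) :
    |powerSeriesSum (besselCoeff n) y| ≤ 1 / n ! := by
  have hc := abs_besselCoeff_le n
  have h := abs_le_abs_zero_of_ode (a := (n : ℝ) + 1)
    (by linarith [(n.cast_nonneg : (0 : ℝ) ≤ n)])
    (hasDerivAt_powerSeriesSum hc) (hasDerivAt_powerSeriesSum (abs_derivCoeff_le hc))
    (powerSeriesSum_besselCoeff_ode n) hy
  simpa [powerSeriesSum_zero, besselCoeff] using h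

theorem besselJ_eq_mul_powerSeriesSum (n : ℕ) (τ : ℝ) :
    besselJ n τ = (τ / 2) ^ n * powerSeriesSum (besselCoeff n) ((τ / 2) ^ 2) := by
  rw [besselJ, powerSeriesSum, ← tsum_mul_left]
  congr 1 with m
  rw [besselCoeff, pow_add, pow_mul]
  ring

theorem abs_besselJ_le (n : ℕ) (τ : ℝ) : |besselJ n τ| ≤ (|τ| / 2) ^ n / n ! := by
  calc |besselJ n τ| = (|τ| / 2) ^ n * |powerSeriesSum (besselCoeff n) ((τ / 2) ^ 2)| := by
        rw [besselJ_eq_mul_powerSeriesSum, abs_mul, abs_pow, abs_div, abs_two]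
    _ ≤ (|τ| / 2) ^ n * (1 / n !) := by
        gcongr
        exact abs_powerSeriesSum_besselCoeff_le n (sq_nonneg _)
    _ = (|τ| / 2) ^ n / n ! := by ring

theorem pow_add_div_factorial_le {x : ℝ} (hx : 0 ≤ x) (n k : ℕ) :
    x ^ (n + k) / (n + k)! ≤ x ^ n / n ! * (x / (n + 1)) ^ k := by
  have hfac : (n ! : ℝ) * (n + 1) ^ k ≤ (n + k)! := by exact_mod_cast factorial_mul_pow_le_factorial
  calc x ^ (n + k) / (n + k)! ≤ x ^ (n + k) / (n ! * (n + 1) ^ k) := by gcongr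
    _ = x ^ n / n ! * (x / (n + 1)) ^ k := by rw [pow_add, div_pow]; field_simp

theorem pow_div_factorial_le_stirling {x : ℝ} (hx : 0 ≤ x) {n : ℕ} (hn : n ≠ 0) :
    x ^ n / n ! ≤ (exp 1 * x / n) ^ n / √(2 * π * n) := by
  have hn' : (0 : ℝ) < n := by positivity
  calc x ^ n / n ! ≤ x ^ n / (√(2 * π * n) * (n / exp 1) ^ n) := by
        gcongr
        exact Stirling.le_factorial_stirling n
    _ = (exp 1 * x / n) ^ n / √(2 * π * n) := by
        rw [div_pow, div_pow, mul_pow]; field_simp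

theorem tsum_abs_besselJ_add_two_mul_le {n : ℕ} {τ : ℝ} (hτ : |τ| ≤ n + 1) :
    ∑' l, |besselJ (n + 2 * l) τ| ≤ 4 / 3 * ((|τ| / 2) ^ n / n !) := by
  set x := |τ| / 2 with hx_def
  set q := (x / (n + 1)) ^ 2 with hq_def
  have hx : x / (n + 1) ≤ 1 / 2 := by
    rw [div_le_iff₀ (by positivity)]
    linarith
  have hq : q ≤ 1 / 4 :=
    calc q ≤ (1 / 2) ^ 2 := by rw [hq_def]; gcongr
      _ = 1 / 4 := by norm_num
  have hq0 : 0 ≤ q := by positivity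
  have hJ (l : ℕ) : |besselJ (n + 2 * l) τ| ≤ x ^ n / n ! * q ^ l := by
    rw [← pow_mul]
    exact (abs_besselJ_le _ τ).trans (pow_add_div_factorial_le (by positivity) n (2 * l))
  have hgeom : Summable fun l => x ^ n / n ! * q ^ l :=
    (summable_geometric_of_lt_one hq0 (by linarith)).mul_left _
  calc ∑' l, |besselJ (n + 2 * l) τ| ≤ ∑' l, x ^ n / n ! * q ^ l :=
        (hgeom.of_nonneg_of_le (fun _ => abs_nonneg _) hJ).tsum_le_tsum hJ hgeom
    _ = x ^ n / n ! * (1 - q)⁻¹ := by rw [tsum_mul_left, tsum_geometric_of_lt_one hq0 (by linarith)]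
    _ ≤ x ^ n / n ! * (4 / 3) := by
        gcongr
        rw [inv_le_comm₀ (by linarith) (by norm_num)]
        linarith
    _ = 4 / 3 * (x ^ n / n !) := mul_comm _ _

theorem le_exp_one_div_two_of_mul_pow_lt_one {A : ℝ} {k : ℕ} (hk : k ≠ 0)
    (h : 4 / (3 * √π) * A ^ (2 * k) < 1) : A ≤ exp 1 / 2 := by
  have he : 2.7182818283 < exp 1 := exp_one_gt_d9
  rcases le_or_gt A 1 with hA | hA
  · linarith
  have hsqrtπ : √π ≤ 2 := by
    rw [show (2 : ℝ) = √(2 ^ 2) by rw [sqrt_sq zero_le_two]]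
    exact sqrt_le_sqrt (by linarith [pi_le_four])
  have hpow : A ^ (2 * k) < 3 * √π / 4 := by
    rw [div_mul_eq_mul_div, div_lt_one (by positivity)] at h
    linarith
  have hsq : A ^ 2 ≤ A ^ (2 * k) := pow_le_pow_right₀ hA.le (by omega)
  nlinarith

end

/-- If `(4/(3√π))·(e|τ|/(4(R+1)))^(2(R+1)) ≤ ε` with `ε ∈ (0,1)`, then the Bessel tail sum is
bounded by `ε`. -/
theorem bessel_tail_bound (τ : ℝ) (R : ℕ) (ε : ℝ) (hε : ε ∈ Set.Ioo (0 : ℝ) 1)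
    (h : 4 / (3 * Real.sqrt Real.pi) *
        (Real.exp 1 * |τ| / (4 * (R + 1))) ^ (2 * (R + 1)) ≤ ε) :
    2 * ∑' l : ℕ, |besselJ (2 * R + 2 * l + 2) τ| ≤ ε := by
  simp_rw [show ∀ l, 2 * R + 2 * l + 2 = 2 * R + 2 + 2 * l by omega]
  set n := 2 * R + 2 with hn_def
  set A := exp 1 * |τ| / (4 * (R + 1)) with hA_def
  have hn : (n : ℝ) = 2 * (R + 1) := by push_cast [n]; ring
  have hA : A = exp 1 * (|τ| / 2) / n := by rw [hn, hA_def]; field_simp; ring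
  have hAe : A ≤ exp 1 / 2 := le_exp_one_div_two_of_mul_pow_lt_one R.succ_ne_zero (h.trans_lt hε.2)
  have hτ : |τ| ≤ n + 1 := by
    rw [hA, div_le_div_iff₀ (by positivity) two_pos] at hAe
    nlinarith [exp_pos 1]
  have hstirling : (|τ| / 2) ^ n / n ! ≤ A ^ n / (2 * √π) := by
    refine (pow_div_factorial_le_stirling (by positivity) (by omega)).trans ?_
    rw [← hA]
    gcongr
    rw [mul_right_comm, sqrt_mul' _ pi_pos.le]
    gcongr
    rw [le_sqrt' two_pos, hn]
    linarith [R.cast_nonneg (α := ℝ)]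
  calc 2 * ∑' l, |besselJ (n + 2 * l) τ|
    _ ≤ 2 * (4 / 3 * (A ^ n / (2 * √π))) := by
        gcongr
        exact (tsum_abs_besselJ_add_two_mul_le hτ).trans (by gcongr)
    _ = 4 / (3 * √π) * A ^ (2 * (R + 1)) := by rw [show 2 * (R + 1) = n by omega]; ring
    _ ≤ ε := h
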